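/- The restriction of the Lebesgue measure on the measure algebra $\widehat{\mathcal{B}}$ of $[0,1)$ to the (non-$\sigma$-closed) subalgebra $\widehat{\mathcal{B}}(\widehat{\mathcal{R}})$ generated by the usual Rademacher family $\widehat{\mathcal{R}}$ is not countably additive: there exists a decreasing sequence $(x_n)$ in $\widehat{\mathcal{B}}(\widehat{\mathcal{R}})$ with $\inf_n x_n = \mathbf{0}$ computed inside $\widehat{\mathcal{B}}(\widehat{\mathcal{R}})$, while $\mu(x_n) \ge 1/2$ for all $n$. -/

import Mathlib

open MeasureTheory

def dyadicI (n k : ℕ) : Set ℝ := Set.Ico ((k : ℝ) / 2 ^ n) (((k : ℝ) + 1) / 2 ^ n)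

lemma mem_dyadicI {n k : ℕ} {t : ℝ} :
    t ∈ dyadicI n k ↔ (k : ℝ) ≤ t * 2 ^ n ∧ t * 2 ^ n < k + 1 := by
  have h : (0:ℝ) < 2 ^ n := by positivity
  simp [dyadicI, Set.mem_Ico, div_le_iff₀ h, lt_div_iff₀ h]

lemma dyadicI_unique {n k k' : ℕ} {t : ℝ} (h : t ∈ dyadicI n k) (h' : t ∈ dyadicI n k') :
    k = k' := by
  rw [mem_dyadicI] at h h'
  have h1 : (k:ℝ) < k' + 1 := lt_of_le_of_lt h.1 h'.2
  have h2 : (k':ℝ) < k + 1 := lt_of_le_of_lt h'.1 h.2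
  have h1' : k < k' + 1 := by exact_mod_cast h1
  have h2' : k' < k + 1 := by exact_mod_cast h2
  omega

lemma dyadicI_subset {m M : ℕ} (h : m ≤ M) (k : ℕ) :
    dyadicI M k ⊆ dyadicI m (k / 2 ^ (M - m)) := by
  intro t ht
  rw [mem_dyadicI] at ht ⊢
  set d := 2 ^ (M - m) with hd
  set q := k / d with hq
  have hdpos : 0 < d := Nat.pow_pos (by norm_num)
  have hdR : (0:ℝ) < (d:ℝ) := by exact_mod_cast hdpos
  have hM : (2:ℝ) ^ M = 2 ^ m * d := by
    rw [hd]; push_cast; rw [← pow_add]; congr 1; omega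
  have h1 : q * d ≤ k := Nat.div_mul_le_self k d
  have h2 : k + 1 ≤ (q + 1) * d := (Nat.div_lt_iff_lt_mul hdpos).mp (Nat.lt_succ_self q)
  constructor
  · have h1' : (q:ℝ) * d ≤ (k:ℝ) := by exact_mod_cast h1
    rw [← mul_le_mul_iff_left₀ hdR]
    calc (q:ℝ) * d ≤ k := h1'
    _ ≤ t * 2 ^ M := ht.1
    _ = t * 2 ^ m * d := by rw [hM, mul_assoc]
  · have h2' : ((k:ℝ) + 1) ≤ ((q:ℝ) + 1) * d := by exact_mod_cast h2
    rw [← mul_lt_mul_iff_left₀ hdR]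
    calc t * 2 ^ m * d = t * 2 ^ M := by rw [hM, mul_assoc]
    _ < k + 1 := ht.2
    _ ≤ (q + 1) * d := h2'



/-- removed indices at stage N (level 2N+2) -/
def DBad (N k : ℕ) : Prop := ∃ n ≤ N, (k / 2 ^ (2*N - 2*n)) % 2 ^ (n + 2) = 0

instance : ∀ N k, Decidable (DBad N k) := fun N k => by
  unfold DBad; infer_instance

def DS (N : ℕ) : Finset ℕ := (Finset.range (2 ^ (2*N + 2))).filter (fun k => ¬ DBad N k)

def DX (N : ℕ) : Set ℝ := ⋃ k ∈ DS N, dyadicI (2*N + 2) k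

lemma DX_succ_subset (N : ℕ) : DX (N + 1) ⊆ DX N := by
  intro t ht
  simp only [DX, Set.mem_iUnion, exists_prop] at ht ⊢
  obtain ⟨k, hk, htk⟩ := ht
  simp only [DS, Finset.mem_filter, Finset.mem_range] at hk
  refine ⟨k / 4, ?_, ?_⟩
  · simp only [DS, Finset.mem_filter, Finset.mem_range]
    constructor
    · have : k < 2 ^ (2*N + 2) * 4 := by
        have := hk.1; rw [show 2*(N+1)+2 = (2*N+2)+2 by ring, pow_add] at this; omega
      omega
    · intro ⟨n, hn, hmod⟩
      apply hk.2
      refine ⟨n, by omega, ?_⟩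
      rw [show 2*(N+1) - 2*n = (2*N - 2*n) + 2 by omega, pow_add]
      rw [Nat.div_div_eq_div_mul] at hmod
      convert hmod using 3
      ring
  · have := dyadicI_subset (m := 2*N+2) (M := 2*(N+1)+2) (by omega) k
    rw [show 2*(N+1)+2 - (2*N+2) = 2 by omega] at this
    exact this htk

def DyadicAlg : Set (Set ℝ) :=
  {z | ∃ s : Finset (ℕ × ℕ), (∀ p ∈ s, p.2 < 2 ^ p.1) ∧ z = ⋃ p ∈ s, dyadicI p.1 p.2}

lemma DX_mem (N : ℕ) : DX N ∈ DyadicAlg := by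
  refine ⟨(DS N).image (fun k => (2*N+2, k)), ?_, ?_⟩
  · intro p hp
    simp only [Finset.mem_image] at hp
    obtain ⟨k, hk, rfl⟩ := hp
    simpa [DS, Finset.mem_filter, Finset.mem_range] using (Finset.mem_filter.mp hk).1
  · ext t
    simp only [DX, Set.mem_iUnion, exists_prop, Finset.mem_image]
    constructor
    · rintro ⟨k, hk, ht⟩; exact ⟨(2*N+2, k), ⟨k, hk, rfl⟩, ht⟩
    · rintro ⟨p, ⟨k, hk, rfl⟩, ht⟩; exact ⟨k, hk, ht⟩

/-- the removed subinterval of `dyadicI n k` -/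
def DJ (n k : ℕ) : Set ℝ := dyadicI (2*n + 2) (k * 2 ^ (n + 2))

lemma DJ_subset (n k : ℕ) : DJ n k ⊆ dyadicI n k := by
  have h := dyadicI_subset (m := n) (M := 2*n+2) (by omega) (k * 2 ^ (n + 2))
  rw [show 2*n+2 - n = n + 2 by omega, Nat.mul_div_cancel _ (Nat.pow_pos (by norm_num))] at h
  exact h

lemma DJ_disjoint_DX (n k : ℕ) : DJ n k ∩ DX n = ∅ := by
  ext t
  simp only [Set.mem_inter_iff, Set.mem_empty_iff_false, iff_false, not_and]
  intro htJ htX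
  simp only [DX, Set.mem_iUnion, exists_prop] at htX
  obtain ⟨k', hk', ht'⟩ := htX
  have : k * 2 ^ (n + 2) = k' := dyadicI_unique htJ ht'
  subst this
  simp only [DS, Finset.mem_filter] at hk'
  exact hk'.2 ⟨n, le_refl n, by simp⟩

lemma volume_dyadicI (n k : ℕ) : volume (dyadicI n k) = ENNReal.ofReal (1 / 2 ^ n) := by
  rw [dyadicI, Real.volume_Ico]
  congr 1
  field_simp
  ring

lemma volume_dyadicI_pos (n k : ℕ) : 0 < volume (dyadicI n k) := by
  rw [volume_dyadicI]
  apply ENNReal.ofReal_pos.mpr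
  positivity

lemma DX_inf (z : Set ℝ) (hz : z ∈ DyadicAlg) (h : ∀ n, volume (z \ DX n) = 0) :
    volume z = 0 := by
  obtain ⟨s, hs, rfl⟩ := hz
  have hempty : s = ∅ := by
    apply Finset.eq_empty_of_forall_notMem
    intro p hp
    have hsub : dyadicI p.1 p.2 ⊆ ⋃ q ∈ s, dyadicI q.1 q.2 := by
      intro t ht; exact Set.mem_biUnion hp ht
    have h0 : volume (dyadicI p.1 p.2 \ DX p.1) = 0 :=
      measure_mono_null (Set.diff_subset_diff_left hsub) (h p.1)
    have hJsub : DJ p.1 p.2 ⊆ dyadicI p.1 p.2 \ DX p.1 := by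
      intro t ht
      refine ⟨DJ_subset _ _ ht, ?_⟩
      intro htX
      have := DJ_disjoint_DX p.1 p.2
      have : t ∈ DJ p.1 p.2 ∩ DX p.1 := ⟨ht, htX⟩
      rw [DJ_disjoint_DX] at this
      exact this
    have := measure_mono_null hJsub h0
    exact absurd this (volume_dyadicI_pos _ _).ne'
  subst hempty
  simp

lemma DX_cover (N : ℕ) :
    Set.Ico (0:ℝ) 1 ⊆ DX N ∪ ⋃ n ∈ Finset.range (N+1), ⋃ k ∈ Finset.range (2^n), DJ n k := by
  intro t ht
  obtain ⟨ht0, ht1⟩ := ht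
  set M := 2*N + 2 with hM
  have h2M : (0:ℝ) < 2 ^ M := by positivity
  have h0 : 0 ≤ t * 2 ^ M := by positivity
  set k := (⌊t * 2 ^ M⌋).toNat with hk
  have hfloor : (k : ℝ) = ⌊t * 2 ^ M⌋ := by
    rw [hk]; exact_mod_cast Int.toNat_of_nonneg (Int.floor_nonneg.mpr h0)
  have hmem : t ∈ dyadicI M k := by
    rw [mem_dyadicI, hfloor]
    exact ⟨Int.floor_le _, Int.lt_floor_add_one _⟩
  have hklt : k < 2 ^ M := by
    have : t * 2 ^ M < 2 ^ M := by nlinarith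
    have h1 : (k : ℝ) < 2 ^ M := lt_of_le_of_lt (hfloor ▸ Int.floor_le _) this
    exact_mod_cast h1
  by_cases hbad : DBad N k
  · right
    obtain ⟨n, hn, hmod⟩ := hbad
    set q := k / 2 ^ (2*N - 2*n) with hq
    set j := q / 2 ^ (n+2) with hj
    have hqd : j * 2 ^ (n+2) = q := Nat.div_mul_cancel (Nat.dvd_of_mod_eq_zero hmod)
    have hqlt : q < 2 ^ (2*n+2) := by
      rw [hq, Nat.div_lt_iff_lt_mul (Nat.pow_pos (by norm_num)), ← pow_add]
      rw [show 2*n+2 + (2*N-2*n) = M by omega]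
      exact hklt
    have hjlt : j < 2 ^ n := by
      have : j * 2 ^ (n+2) < 2 ^ n * 2 ^ (n+2) := by
        rw [hqd, ← pow_add]; rw [show n + (n+2) = 2*n+2 by ring]; exact hqlt
      exact Nat.lt_of_mul_lt_mul_right this
    have hmem' : t ∈ dyadicI (2*n+2) q := by
      have h := dyadicI_subset (m := 2*n+2) (M := M) (by omega) k
      rw [show M - (2*n+2) = 2*N - 2*n by omega] at h
      exact h hmem
    simp only [Set.mem_iUnion, exists_prop]
    refine ⟨n, Finset.mem_range.mpr (by omega), j, Finset.mem_range.mpr hjlt, ?_⟩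
    rw [DJ, hqd]
    exact hmem'
  · left
    simp only [DX, Set.mem_iUnion, exists_prop]
    exact ⟨k, by simp [DS, Finset.mem_filter, Finset.mem_range, hklt, hbad]; exact hklt, hmem⟩

lemma volume_DJ (n k : ℕ) : volume (DJ n k) = (2:ENNReal)⁻¹ ^ (2*n+2) := by
  rw [DJ, volume_dyadicI]
  rw [show (1 / 2 ^ (2*n+2) : ℝ) = (2⁻¹)^(2*n+2) by rw [one_div, ← inv_pow]]
  rw [ENNReal.ofReal_pow (by norm_num : (0:ℝ) ≤ 2⁻¹)]
  congr 1
  rw [ENNReal.ofReal_inv_of_pos (by norm_num : (0:ℝ) < 2)]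
  norm_num

lemma DX_volume (N : ℕ) : (1/2 : ENNReal) ≤ volume (DX N) := by
  have hcover := DX_cover N
  have h1 : (1 : ENNReal) = volume (Set.Ico (0:ℝ) 1) := by
    rw [Real.volume_Ico]; norm_num
  have hU : volume (⋃ n ∈ Finset.range (N+1), ⋃ k ∈ Finset.range (2^n), DJ n k)
      ≤ 2⁻¹ := by
    calc volume (⋃ n ∈ Finset.range (N+1), ⋃ k ∈ Finset.range (2^n), DJ n k)
        ≤ ∑ n ∈ Finset.range (N+1), volume (⋃ k ∈ Finset.range (2^n), DJ n k) :=
          measure_biUnion_finset_le _ _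
      _ ≤ ∑ n ∈ Finset.range (N+1), ∑ k ∈ Finset.range (2^n), volume (DJ n k) := by
          exact Finset.sum_le_sum fun n _ => measure_biUnion_finset_le _ _
      _ = ∑ n ∈ Finset.range (N+1), (2:ENNReal)⁻¹ ^ (n+2) := by
          apply Finset.sum_congr rfl
          intro n _
          rw [Finset.sum_congr rfl (fun k _ => volume_DJ n k), Finset.sum_const,
            Finset.card_range, nsmul_eq_mul]
          rw [show 2*n+2 = n + (n+2) by ring, pow_add]
          rw [← mul_assoc]

          push_cast
          rw [← mul_pow]
          rw [ENNReal.mul_inv_cancel (by norm_num) (by norm_num)]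
          simp
      _ ≤ ∑' n : ℕ, (2:ENNReal)⁻¹ ^ (n+2) := ENNReal.sum_le_tsum _
      _ = 2⁻¹ := by
          have : ∀ n : ℕ, (2:ENNReal)⁻¹ ^ (n+2) = (2:ENNReal)⁻¹^2 * 2⁻¹^n := by
            intro n; rw [← pow_add]; ring_nf
          rw [tsum_congr this, ENNReal.tsum_mul_left, ENNReal.tsum_geometric,
            ENNReal.one_sub_inv_two]
          rw [show ((2:ENNReal)⁻¹)⁻¹ = 2 by simp]
          rw [show ((2:ENNReal)⁻¹)^2 = 4⁻¹ by rw [← ENNReal.inv_pow]; norm_num]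
          rw [show (4 : ENNReal) = 2 * 2 by norm_num, ENNReal.mul_inv (by norm_num) (by norm_num)]
          rw [mul_assoc, ENNReal.inv_mul_cancel (by norm_num) (by norm_num), mul_one]
  have hle : (1:ENNReal) ≤ volume (DX N) + 2⁻¹ := by
    calc (1:ENNReal) = volume (Set.Ico (0:ℝ) 1) := h1
      _ ≤ volume (DX N ∪ ⋃ n ∈ Finset.range (N+1), ⋃ k ∈ Finset.range (2^n), DJ n k) :=
          measure_mono hcover
      _ ≤ volume (DX N) + volume (⋃ n ∈ Finset.range (N+1), ⋃ k ∈ Finset.range (2^n), DJ n k) :=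
          measure_union_le _ _
      _ ≤ volume (DX N) + 2⁻¹ := add_le_add_right hU _
  have : (1:ENNReal) - 2⁻¹ ≤ volume (DX N) + 2⁻¹ - 2⁻¹ := tsub_le_tsub_right hle _
  rw [ENNReal.add_sub_cancel_right (by norm_num), ENNReal.one_sub_inv_two] at this
  rw [one_div]
  exact this


/-- The restriction of Lebesgue measure to the subalgebra generated by the usual
Rademacher family is not countably additive: there is a sequence `(x_n)` in the
subalgebra, decreasing modulo null sets, whose infimum computed inside the
subalgebra is `⊥` (every lower bound in the subalgebra is null), while
`μ(x_n) ≥ 1/2` for all `n`. -/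
theorem stmt16 :
    ∃ x : ℕ → Set ℝ,
      (∀ n, x n ∈ DyadicAlg) ∧
      (∀ n, volume (x (n + 1) \ x n) = 0) ∧
      (∀ z ∈ DyadicAlg, (∀ n, volume (z \ x n) = 0) → volume z = 0) ∧
      ∀ n, (1 / 2 : ENNReal) ≤ volume (x n) := by
  refine ⟨DX, DX_mem, fun n => ?_, DX_inf, DX_volume⟩
  rw [Set.diff_eq_empty.mpr (DX_succ_subset n)]
  exact measure_empty
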